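/- arXiv:2410.04150 — 2 statements merged into one kernel-verified Lean document; each statement's English description precedes it below -/
import Mathlib

section
/- Assume A is quadratik and faithful, and identify Aⁿ with the first column of Mₙ(A) (the vector ξ = (ξ₁,…,ξₙ) corresponds to the matrix whose first column has entries L_{ξ₁},…,L_{ξₙ} and whose other entries vanish). Then each Γ_g restricts to an additive bijection γ_g of Aⁿ, g ↦ γ_g is a group action of G on Aⁿ, and γ_g(ξ·a) = γ_g(ξ)·α_g(a) for all ξ ∈ Aⁿ, a ∈ A and g ∈ G, where (ξ·a)_i := ξ_i·a; that is, γ is a G-module action on the right A-module Aⁿ compatible with the action α on A. -/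
/-- An algebra `A` is *quadratik* if every element of `A` is a finite sum
`a₁b₁ + … + a_kb_k` of products of elements of `A`. -/
def IsQuadratik (A : Type*) [NonUnitalNonAssocSemiring A] : Prop :=
  ∀ x : A, ∃ l : List (A × A), x = (l.map fun p => p.1 * p.2).sum

/-- An algebra `A` is *faithful* if `a·b = 0` for all `b` implies `a = 0`. -/
def IsFaithful (A : Type*) [Mul A] [Zero A] : Prop :=
  ∀ a : A, (∀ b : A, a * b = 0) → a = 0

/-- Left multiplication `L_a : A → A`, `L_a(x) = a·x`, as a `ℂ`-linear
endomorphism of `A` (an element of `𝓛_A(A)`). -/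
def Lmul {A : Type*} [NonUnitalRing A] [Module ℂ A] [SMulCommClass ℂ A A]
    (a : A) : Module.End ℂ A where
  toFun x := a * x
  map_add' := mul_add a
  map_smul' c x := mul_smul_comm c a x

/-- Membership in `𝓛_A(A)`: a `ℂ`-linear endomorphism `T` of `A` belongs to
`𝓛_A(A)` iff it is right `A`-linear (`T(ab) = T(a)·b`) and adjointable (for all
`a` there is `d` with `a·T(x) = d·x` for all `x`). -/
def MemLA {A : Type*} [NonUnitalRing A] [Module ℂ A]
    (T : Module.End ℂ A) : Prop :=
  (∀ a b : A, T (a * b) = T a * b) ∧ ∀ a : A, ∃ d : A, ∀ x : A, a * T x = d * x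

/-- A matrix over `𝓛_A(A)` (i.e. over `Module.End ℂ A`) belongs to the copy of
`Mₙ(A)` iff all its entries are left multiplications `L_a` with `a ∈ A`. -/
def InMnA {A : Type*} [NonUnitalRing A] [Module ℂ A] [SMulCommClass ℂ A A]
    {n : ℕ} (X : Matrix (Fin n) (Fin n) (Module.End ℂ A)) : Prop :=
  ∀ i j, ∃ a : A, X i j = Lmul a

/-- The upper-left corner copy of `A` in `Mₙ(𝓛_A(A))`: `a ↦ L_a·E₁₁`. -/
def cornerA {A : Type*} [NonUnitalRing A] [Module ℂ A] [SMulCommClass ℂ A A]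
    {n : ℕ} [NeZero n] (a : A) : Matrix (Fin n) (Fin n) (Module.End ℂ A) :=
  Matrix.of fun i j => if i = 0 ∧ j = 0 then Lmul a else 0

/-- Identification of `Aⁿ` with the first column of `Mₙ(A)`: the vector `ξ`
corresponds to the matrix whose first column has entries `L_{ξᵢ}` and whose
other entries vanish. -/
def colMat {A : Type*} [NonUnitalRing A] [Module ℂ A] [SMulCommClass ℂ A A]
    {n : ℕ} [NeZero n] (ξ : Fin n → A) :
    Matrix (Fin n) (Fin n) (Module.End ℂ A) :=
  Matrix.of fun i j => if j = 0 then Lmul (ξ i) else 0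

lemma Lmul_zero {A : Type*} [NonUnitalRing A] [Module ℂ A]
    [SMulCommClass ℂ A A] : Lmul (0 : A) = 0 := by
  ext x
  exact zero_mul x

lemma cornerA_inMnA {A : Type*} [NonUnitalRing A] [Module ℂ A]
    [SMulCommClass ℂ A A] {n : ℕ} [NeZero n] (a : A) :
    InMnA (cornerA (n := n) a) := by
  intro i j
  by_cases h : i = 0 ∧ j = 0
  · exact ⟨a, by simp [cornerA, h]⟩
  · exact ⟨0, by simp [cornerA, h, Lmul_zero]⟩

lemma colMat_inMnA {A : Type*} [NonUnitalRing A] [Module ℂ A]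
    [SMulCommClass ℂ A A] {n : ℕ} [NeZero n] (ξ : Fin n → A) :
    InMnA (colMat ξ) := by
  intro i j
  by_cases h : j = 0
  · exact ⟨ξ i, by simp [colMat, h]⟩
  · exact ⟨0, by simp [colMat, h, Lmul_zero]⟩


lemma Lmul_apply' {A : Type*} [NonUnitalRing A] [Module ℂ A]
    [SMulCommClass ℂ A A] (a x : A) : Lmul a x = a * x := rfl

lemma Lmul_add' {A : Type*} [NonUnitalRing A] [Module ℂ A]
    [SMulCommClass ℂ A A] (a b : A) : Lmul (a + b) = Lmul a + Lmul b := by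
  ext x; exact add_mul a b x

lemma colMat_add' {A : Type*} [NonUnitalRing A] [Module ℂ A]
    [SMulCommClass ℂ A A] {n : ℕ} [NeZero n] (ξ η : Fin n → A) :
    colMat (ξ + η) = colMat ξ + colMat η := by
  ext i j : 2
  by_cases h : j = 0 <;> simp [colMat, h, Lmul_add']

lemma colMat_zero' {A : Type*} [NonUnitalRing A] [Module ℂ A]
    [SMulCommClass ℂ A A] {n : ℕ} [NeZero n] :
    colMat (0 : Fin n → A) = 0 := by
  ext i j : 2
  by_cases h : j = 0 <;> simp [colMat, h, Lmul_zero]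

/-- Key computation: if the entries of `X` are right `A`-linear, then
`X * cornerA b` is the column matrix with entries `X i 0 b`. -/
lemma matMul_cornerA {A : Type*} [NonUnitalRing A] [Module ℂ A]
    [SMulCommClass ℂ A A] {n : ℕ} [NeZero n]
    (X : Matrix (Fin n) (Fin n) (Module.End ℂ A))
    (hX : ∀ i, ∀ a b : A, X i 0 (a * b) = X i 0 a * b) (b : A) :
    X * cornerA b = colMat (fun i => X i 0 b) := by
  ext i j : 2
  rw [Matrix.mul_apply]
  by_cases hj : j = 0
  · subst hj
    have : ∀ k : Fin n, X i k * cornerA b k 0 =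
        if k = 0 then X i 0 * Lmul b else 0 := by
      intro k
      by_cases hk : k = 0 <;> simp [cornerA, hk]
    rw [Finset.sum_congr rfl fun k _ => this k, Finset.sum_ite_eq'
      Finset.univ (0 : Fin n) (fun _ => X i 0 * Lmul b)]
    simp only [Finset.mem_univ, if_true, colMat, Matrix.of_apply, if_pos rfl]
    exact hX i b _
  · have : ∀ k : Fin n, X i k * cornerA b k j = 0 := by
      intro k; simp [cornerA, hj]
    simp [this, colMat, hj]
/-- If `A` is quadratik and faithful, each `Γ_g` restricts to an additive
bijection `γ_g` of `Aⁿ` (the first column of `Mₙ(A)`), `g ↦ γ_g` is a group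
action of `G` on `Aⁿ`, and `γ_g(ξ·a) = γ_g(ξ)·α_g(a)`; i.e. `γ` is a `G`-module
action on the right `A`-module `Aⁿ` compatible with the action `α` on `A`. -/
theorem stmt8 (A : Type*) [NonUnitalRing A] [Module ℂ A]
    [SMulCommClass ℂ A A] [IsScalarTower ℂ A A]
    (hquad : IsQuadratik A) (hfaith : IsFaithful A)
    (n : ℕ) [NeZero n]
    (G : Type*) [Group G]
    (B : NonUnitalSubalgebra ℂ (Matrix (Fin n) (Fin n) (Module.End ℂ A)))
    (hB : ∀ x : B, ∀ i j,
      MemLA ((x : Matrix (Fin n) (Fin n) (Module.End ℂ A)) i j))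
    (hMnA : ∀ X : Matrix (Fin n) (Fin n) (Module.End ℂ A), InMnA X → X ∈ B)
    (Γ : G →* RingAut B)
    (hΓlin : ∀ (g : G) (c : ℂ) (x : B), Γ g (c • x) = c • Γ g x)
    (α : G →* RingAut A)
    (hαlin : ∀ (g : G) (c : ℂ) (a : A), α g (c • a) = c • α g a)
    (hequiv : ∀ (g : G) (a : A),
      ((Γ g ⟨cornerA a, hMnA _ (cornerA_inMnA a)⟩ : B) :
          Matrix (Fin n) (Fin n) (Module.End ℂ A)) = cornerA (α g a)) :
    ∃ γ : G → (Fin n → A) → (Fin n → A),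
      (∀ (g : G) (ξ : Fin n → A),
        ((Γ g ⟨colMat ξ, hMnA _ (colMat_inMnA ξ)⟩ : B) :
            Matrix (Fin n) (Fin n) (Module.End ℂ A)) = colMat (γ g ξ)) ∧
      (∀ g : G, Function.Bijective (γ g)) ∧
      (∀ (g : G) (ξ η : Fin n → A), γ g (ξ + η) = γ g ξ + γ g η) ∧
      γ 1 = id ∧
      (∀ g h : G, γ (g * h) = γ g ∘ γ h) ∧
      (∀ (g : G) (ξ : Fin n → A) (a : A),
        γ g (fun i => ξ i * a) = fun i => γ g ξ i * α g a) := by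
  classical
  have hLinj : Function.Injective (Lmul (A := A)) := by
    intro a b h
    have h' : ∀ x : A, (a - b) * x = 0 := by
      intro x
      have hx : a * x = b * x := congrFun (congrArg DFunLike.coe h) x
      rw [sub_mul, hx, sub_self]
    exact sub_eq_zero.mp (hfaith _ h')
  have hcolinj : Function.Injective (colMat (A := A) (n := n)) := by
    intro ξ η h
    funext i
    apply hLinj
    have := congrFun (congrFun h i) (0 : Fin n)
    simpa [colMat] using this
  have hmemcol : ∀ ξ : Fin n → A, colMat ξ ∈ B := fun ξ => hMnA _ (colMat_inMnA ξ)
  have coe_add : ∀ x y : B, ((x + y : B) : Matrix (Fin n) (Fin n) (Module.End ℂ A))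
      = (x : Matrix (Fin n) (Fin n) (Module.End ℂ A)) + y := fun _ _ => rfl
  have coe_mul : ∀ x y : B, ((x * y : B) : Matrix (Fin n) (Fin n) (Module.End ℂ A))
      = (x : Matrix (Fin n) (Fin n) (Module.End ℂ A)) * y := fun _ _ => rfl
  have hcolX : ∀ ξ : Fin n → A, ∀ i, ∀ a c : A,
      colMat ξ i 0 (a * c) = colMat ξ i 0 a * c := by
    intro ξ i a c
    simp [colMat, Lmul_apply', mul_assoc]
  -- the first column is stable under right multiplication by corner elements
  have hprodB : ∀ (ξ : Fin n → A) (b : A),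
      (⟨colMat (fun i => ξ i * b), hmemcol _⟩ : B) =
        (⟨colMat ξ, hmemcol ξ⟩ : B) * ⟨cornerA b, hMnA _ (cornerA_inMnA b)⟩ := by
    intro ξ b
    apply Subtype.ext
    rw [coe_mul]
    show colMat (fun i => ξ i * b) = colMat ξ * cornerA b
    rw [matMul_cornerA _ (hcolX ξ) b]
    exact congrArg colMat (funext fun i => by simp [colMat, Lmul_apply']).symm
  have hGzero : ∀ g : G, Γ g (0 : B) = 0 := by
    intro g
    have h00 := (Γ g).map_add 0 0
    rw [add_zero] at h00
    exact (left_eq_add.mp h00)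
  -- existence of the column image
  have hex : ∀ (g : G) (ξ : Fin n → A), ∃ η : Fin n → A,
      ((Γ g ⟨colMat ξ, hMnA _ (colMat_inMnA ξ)⟩ : B) :
          Matrix (Fin n) (Fin n) (Module.End ℂ A)) = colMat η := by
    intro g
    set S : AddSubmonoid (Fin n → A) :=
      { carrier := {ξ | ∃ η : Fin n → A,
          ((Γ g ⟨colMat ξ, hMnA _ (colMat_inMnA ξ)⟩ : B) :
              Matrix (Fin n) (Fin n) (Module.End ℂ A)) = colMat η}
        zero_mem' := by
          refine ⟨0, ?_⟩
          have h0 : (⟨colMat (0 : Fin n → A), hMnA _ (colMat_inMnA 0)⟩ : B) = 0 :=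
            Subtype.ext colMat_zero'
          rw [h0, hGzero g]
          simpa using colMat_zero'.symm
        add_mem' := by
          rintro ξ₁ ξ₂ ⟨η₁, h₁⟩ ⟨η₂, h₂⟩
          refine ⟨η₁ + η₂, ?_⟩
          have hsum : (⟨colMat (ξ₁ + ξ₂), hMnA _ (colMat_inMnA _)⟩ : B) =
              ⟨colMat ξ₁, hMnA _ (colMat_inMnA _)⟩ + ⟨colMat ξ₂, hMnA _ (colMat_inMnA _)⟩ :=
            Subtype.ext (colMat_add' ξ₁ ξ₂)
          rw [hsum, (Γ g).map_add, coe_add, h₁, h₂, colMat_add'] } with hS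
    have hmulmem : ∀ (ξ : Fin n → A) (b : A), (fun i => ξ i * b) ∈ S := by
      intro ξ b
      refine ⟨fun i => ((Γ g ⟨colMat ξ, hmemcol ξ⟩ : B) :
        Matrix (Fin n) (Fin n) (Module.End ℂ A)) i 0 (α g b), ?_⟩
      have h1 : (⟨colMat (fun i => ξ i * b), hMnA _ (colMat_inMnA _)⟩ : B) =
          (⟨colMat ξ, hmemcol ξ⟩ : B) * ⟨cornerA b, hMnA _ (cornerA_inMnA b)⟩ :=
        hprodB ξ b
      rw [h1, (Γ g).map_mul]
      have hc : Γ g ⟨cornerA b, hMnA _ (cornerA_inMnA b)⟩ =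
          ⟨cornerA (α g b), hMnA _ (cornerA_inMnA _)⟩ :=
        Subtype.ext (hequiv g b)
      rw [hc, coe_mul]
      have hmm : ((⟨cornerA (α g b), hMnA _ (cornerA_inMnA _)⟩ : B) :
          Matrix (Fin n) (Fin n) (Module.End ℂ A)) = cornerA (α g b) := rfl
      rw [hmm, matMul_cornerA _ (fun i a c =>
        (hB (Γ g ⟨colMat ξ, hmemcol ξ⟩) i 0).1 a c) (α g b)]
    have hsingle : ∀ (i : Fin n) (x : A), Pi.single i x ∈ S := by
      intro i x
      obtain ⟨l, hl⟩ := hquad x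
      rw [hl]; clear hl
      induction l with
      | nil => simpa using S.zero_mem
      | cons p l ih =>
        simp only [List.map_cons, List.sum_cons]
        rw [Pi.single_add]
        refine S.add_mem ?_ ih
        have he : (Pi.single i (p.1 * p.2) : Fin n → A) =
            fun j => (Pi.single i p.1 : Fin n → A) j * p.2 := by
          funext j
          by_cases hj : j = i <;> simp [Pi.single_apply, hj]
        rw [he]
        exact hmulmem _ _
    intro ξ
    have hmem : ξ ∈ S := by
      rw [← Finset.univ_sum_single ξ]
      exact AddSubmonoid.sum_mem S fun i _ => hsingle i (ξ i)
    exact hmem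
  choose γ hγ using hex
  refine ⟨γ, hγ, ?_⟩
  have hadd : ∀ (g : G) (ξ η : Fin n → A), γ g (ξ + η) = γ g ξ + γ g η := by
    intro g ξ η
    apply hcolinj
    have hsum : (⟨colMat (ξ + η), hMnA _ (colMat_inMnA _)⟩ : B) =
        ⟨colMat ξ, hMnA _ (colMat_inMnA _)⟩ + ⟨colMat η, hMnA _ (colMat_inMnA _)⟩ :=
      Subtype.ext (colMat_add' ξ η)
    calc colMat (γ g (ξ + η))
        = ((Γ g ⟨colMat (ξ + η), hMnA _ (colMat_inMnA _)⟩ : B) :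
            Matrix (Fin n) (Fin n) (Module.End ℂ A)) := (hγ g _).symm
      _ = ((Γ g ⟨colMat ξ, hMnA _ (colMat_inMnA _)⟩ : B) :
            Matrix (Fin n) (Fin n) (Module.End ℂ A)) +
          ((Γ g ⟨colMat η, hMnA _ (colMat_inMnA _)⟩ : B) :
            Matrix (Fin n) (Fin n) (Module.End ℂ A)) := by
          rw [hsum, (Γ g).map_add, coe_add]
      _ = colMat (γ g ξ) + colMat (γ g η) := by rw [hγ g ξ, hγ g η]
      _ = colMat (γ g ξ + γ g η) := (colMat_add' _ _).symm
  have hone : γ 1 = id := by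
    funext ξ
    apply hcolinj
    rw [← hγ 1 ξ, Γ.map_one]
    rfl
  have hmulg : ∀ g h : G, γ (g * h) = γ g ∘ γ h := by
    intro g h
    funext ξ
    apply hcolinj
    rw [← hγ (g * h) ξ, Γ.map_mul]
    have hh : Γ h ⟨colMat ξ, hMnA _ (colMat_inMnA _)⟩ =
        ⟨colMat (γ h ξ), hMnA _ (colMat_inMnA _)⟩ :=
      Subtype.ext (hγ h ξ)
    show ((Γ g (Γ h ⟨colMat ξ, hMnA _ (colMat_inMnA _)⟩) : B) :
        Matrix (Fin n) (Fin n) (Module.End ℂ A)) = colMat ((γ g ∘ γ h) ξ)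
    rw [hh]
    exact hγ g (γ h ξ)
  have hbij : ∀ g : G, Function.Bijective (γ g) := by
    intro g
    have h1 : Function.LeftInverse (γ g⁻¹) (γ g) := by
      intro ξ
      have h := congrFun (hmulg g⁻¹ g) ξ
      rw [inv_mul_cancel, hone] at h
      exact h.symm
    have h2 : Function.RightInverse (γ g⁻¹) (γ g) := by
      intro ξ
      have h := congrFun (hmulg g g⁻¹) ξ
      rw [mul_inv_cancel, hone] at h
      exact h.symm
    exact ⟨h1.injective, h2.surjective⟩
  have hmod : ∀ (g : G) (ξ : Fin n → A) (a : A),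
      γ g (fun i => ξ i * a) = fun i => γ g ξ i * α g a := by
    intro g ξ a
    apply hcolinj
    rw [← hγ g (fun i => ξ i * a), hprodB ξ a, (Γ g).map_mul]
    have hc : Γ g ⟨cornerA a, hMnA _ (cornerA_inMnA a)⟩ =
        ⟨cornerA (α g a), hMnA _ (cornerA_inMnA _)⟩ :=
      Subtype.ext (hequiv g a)
    rw [hc, coe_mul]
    have hmm : ((⟨cornerA (α g a), hMnA _ (cornerA_inMnA _)⟩ : B) :
        Matrix (Fin n) (Fin n) (Module.End ℂ A)) = cornerA (α g a) := rfl
    rw [hmm, hγ g ξ, matMul_cornerA _ (hcolX (γ g ξ)) (α g a)]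
    exact congrArg colMat (funext fun i => by simp [colMat, Lmul_apply'])
  exact ⟨hbij, hadd, hone, hmulg, hmod⟩
end

section
/- Assume A is quadratik. Then for every g ∈ G the automorphism Γ_g maps the first row of Mₙ(A) into itself. -/
set_option synthInstance.maxHeartbeats 1000000
set_option maxHeartbeats 1600000

section MyAux

variable {A : Type*} [NonUnitalRing A] [Module ℂ A] [SMulCommClass ℂ A A]

@[simp] lemma myLmul_apply (a x : A) : Lmul a x = a * x := rfl

lemma myLmul_add (a b : A) : Lmul (a + b) = Lmul a + Lmul b := by
  ext x; simp [add_mul]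

lemma myLmul_mul (a b : A) : Lmul (a * b) = Lmul a * Lmul b := by
  ext x; simp [Module.End.mul_apply, mul_assoc]

/-- Matrix with `L_b` at position `(0, j)` and zeros elsewhere. -/
def rowMat {n : ℕ} [NeZero n] (b : A) (j : Fin n) :
    Matrix (Fin n) (Fin n) (Module.End ℂ A) :=
  Matrix.of fun i k => if i = 0 ∧ k = j then Lmul b else 0

lemma rowMat_inMnA {n : ℕ} [NeZero n] (b : A) (j : Fin n) :
    InMnA (rowMat b j) := by
  intro i k
  by_cases h : i = 0 ∧ k = j
  · exact ⟨b, by simp [rowMat, h]⟩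
  · exact ⟨0, by simp [rowMat, h, Lmul_zero]⟩

lemma rowMat_zero {n : ℕ} [NeZero n] (j : Fin n) :
    rowMat (0 : A) j = 0 := by
  ext i k
  by_cases h : i = 0 ∧ k = j <;> simp [rowMat, h, Lmul_zero]

lemma rowMat_add {n : ℕ} [NeZero n] (a b : A) (j : Fin n) :
    rowMat (a + b) j = rowMat a j + rowMat b j := by
  ext i k
  by_cases h : i = 0 ∧ k = j <;> simp [rowMat, h, myLmul_add]

lemma cornerA_mul {n : ℕ} [NeZero n] (c : A)
    (Z : Matrix (Fin n) (Fin n) (Module.End ℂ A)) (i j : Fin n) :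
    ((cornerA c * Z : Matrix (Fin n) (Fin n) (Module.End ℂ A))) i j =
      if i = 0 then Lmul c * Z 0 j else 0 := by
  rw [Matrix.mul_apply]
  by_cases hi : i = 0
  · subst hi
    simp [cornerA, ite_mul]
  · simp [cornerA, hi, ite_mul]

lemma cornerA_mul_rowMat {n : ℕ} [NeZero n] (a b : A) (j : Fin n) :
    (cornerA a * rowMat b j : Matrix (Fin n) (Fin n) (Module.End ℂ A)) =
      rowMat (a * b) j := by
  ext i k
  rw [cornerA_mul]
  by_cases hi : i = 0
  · subst hi
    by_cases hk : k = j <;> simp [rowMat, hk, myLmul_mul]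
  · simp [rowMat, hi]

end MyAux

/-- If `A` is quadratik, then for every `g ∈ G` the automorphism `Γ_g` maps the
first row of `Mₙ(A)` into itself. -/
theorem stmt9 (A : Type*) [NonUnitalRing A] [Module ℂ A]
    [SMulCommClass ℂ A A] [IsScalarTower ℂ A A]
    (hquad : IsQuadratik A)
    (n : ℕ) [NeZero n]
    (G : Type*) [Group G]
    (B : NonUnitalSubalgebra ℂ (Matrix (Fin n) (Fin n) (Module.End ℂ A)))
    (hB : ∀ x : B, ∀ i j,
      MemLA ((x : Matrix (Fin n) (Fin n) (Module.End ℂ A)) i j))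
    (hMnA : ∀ X : Matrix (Fin n) (Fin n) (Module.End ℂ A), InMnA X → X ∈ B)
    (Γ : G →* RingAut B)
    (hΓlin : ∀ (g : G) (c : ℂ) (x : B), Γ g (c • x) = c • Γ g x)
    (α : G →* RingAut A)
    (hαlin : ∀ (g : G) (c : ℂ) (a : A), α g (c • a) = c • α g a)
    (hequiv : ∀ (g : G) (a : A),
      ((Γ g ⟨cornerA a, hMnA _ (cornerA_inMnA a)⟩ : B) :
          Matrix (Fin n) (Fin n) (Module.End ℂ A)) = cornerA (α g a)) :
    ∀ (g : G) (X : Matrix (Fin n) (Fin n) (Module.End ℂ A)) (hX : InMnA X),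
      (∀ i j, i ≠ 0 → X i j = 0) →
      InMnA ((Γ g ⟨X, hMnA X hX⟩ : B) :
          Matrix (Fin n) (Fin n) (Module.End ℂ A)) ∧
      ∀ i j, i ≠ 0 →
        ((Γ g ⟨X, hMnA X hX⟩ : B) :
            Matrix (Fin n) (Fin n) (Module.End ℂ A)) i j = 0 := by
  intro g X hX hrow
  classical
  -- The additive submonoid of `B` generated by products `cornerA c * z`.
  set S : AddSubmonoid B := AddSubmonoid.closure
    {w : B | ∃ (c : A) (z : B),
      w = (⟨cornerA c, hMnA _ (cornerA_inMnA c)⟩ : B) * z} with hSdef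
  -- The property we want to propagate.
  set P : B → Prop := fun w =>
    InMnA ((w : B) : Matrix (Fin n) (Fin n) (Module.End ℂ A)) ∧
      ∀ i j, i ≠ 0 →
        ((w : B) : Matrix (Fin n) (Fin n) (Module.End ℂ A)) i j = 0 with hPdef
  -- Every element of `S` satisfies `P`.
  have hPS : ∀ w ∈ S, P w := by
    intro w hw
    refine AddSubmonoid.closure_induction ?_ ?_ ?_ hw
    · rintro w ⟨c, z, rfl⟩
      have hval : ((⟨cornerA c, hMnA _ (cornerA_inMnA c)⟩ * z : B) :
          Matrix (Fin n) (Fin n) (Module.End ℂ A)) =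
          cornerA c * (z : Matrix (Fin n) (Fin n) (Module.End ℂ A)) := rfl
      constructor
      · intro i j
        rw [hval, cornerA_mul]
        by_cases hi : i = 0
        · obtain ⟨d, hd⟩ := (hB z 0 j).2 c
          refine ⟨d, ?_⟩
          rw [if_pos hi]
          ext x
          simp [Module.End.mul_apply, hd x]
        · exact ⟨0, by simp [hi, Lmul_zero]⟩
      · intro i j hi
        rw [hval, cornerA_mul, if_neg hi]
    · constructor
      · intro i j; exact ⟨0, by simp [Lmul_zero]⟩
      · intro i j _; simp
    · rintro x y _ _ ⟨hx1, hx2⟩ ⟨hy1, hy2⟩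
      constructor
      · intro i j
        obtain ⟨a, ha⟩ := hx1 i j
        obtain ⟨b, hb⟩ := hy1 i j
        refine ⟨a + b, ?_⟩
        have : ((x + y : B) : Matrix (Fin n) (Fin n) (Module.End ℂ A)) i j =
            ((x : B) : Matrix (Fin n) (Fin n) (Module.End ℂ A)) i j +
            ((y : B) : Matrix (Fin n) (Fin n) (Module.End ℂ A)) i j := rfl
        rw [this, ha, hb, myLmul_add]
      · intro i j hi
        have : ((x + y : B) : Matrix (Fin n) (Fin n) (Module.End ℂ A)) i j =
            ((x : B) : Matrix (Fin n) (Fin n) (Module.End ℂ A)) i j +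
            ((y : B) : Matrix (Fin n) (Fin n) (Module.End ℂ A)) i j := rfl
        rw [this, hx2 i j hi, hy2 i j hi, add_zero]
  -- `S` is invariant under `Γ g`.
  have hΓS : ∀ w ∈ S, Γ g w ∈ S := by
    intro w hw
    refine AddSubmonoid.closure_induction ?_ ?_ ?_ hw
    · rintro w ⟨c, z, rfl⟩
      rw [map_mul]
      have hc : Γ g (⟨cornerA c, hMnA _ (cornerA_inMnA c)⟩ : B) =
          (⟨cornerA (α g c), hMnA _ (cornerA_inMnA (α g c))⟩ : B) :=
        Subtype.ext (hequiv g c)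
      rw [hc]
      exact AddSubmonoid.subset_closure ⟨α g c, Γ g z, rfl⟩
    · rw [map_zero]; exact zero_mem S
    · intro x y _ _ hx hy
      rw [map_add]; exact add_mem hx hy
  -- Row matrices `rowMat b j` give elements of `S` (using quadratik).
  have key : ∀ (l : List (A × A)) (j : Fin n) (w : B),
      ((w : B) : Matrix (Fin n) (Fin n) (Module.End ℂ A)) =
        rowMat ((l.map fun p => p.1 * p.2).sum) j → w ∈ S := by
    intro l
    induction l with
    | nil =>
      intro j w hw
      have : w = 0 := Subtype.ext (by simpa [rowMat_zero] using hw)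
      rw [this]; exact zero_mem S
    | cons p t ih =>
      intro j w hw
      have hw2 : w =
          (⟨cornerA p.1, hMnA _ (cornerA_inMnA p.1)⟩ : B) *
            (⟨rowMat p.2 j, hMnA _ (rowMat_inMnA p.2 j)⟩ : B) +
          (⟨rowMat ((t.map fun p => p.1 * p.2).sum) j,
            hMnA _ (rowMat_inMnA _ j)⟩ : B) := by
        apply Subtype.ext
        have : ((w : B) : Matrix (Fin n) (Fin n) (Module.End ℂ A)) =
            rowMat (p.1 * p.2 + (t.map fun p => p.1 * p.2).sum) j := by
          simpa using hw
        rw [this, rowMat_add]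
        have hmul : ((⟨cornerA p.1, hMnA _ (cornerA_inMnA p.1)⟩ *
            ⟨rowMat p.2 j, hMnA _ (rowMat_inMnA p.2 j)⟩ : B) :
            Matrix (Fin n) (Fin n) (Module.End ℂ A)) =
            cornerA p.1 * rowMat p.2 j := rfl
        show _ = ((_ : B) : Matrix (Fin n) (Fin n) (Module.End ℂ A)) +
          ((_ : B) : Matrix (Fin n) (Fin n) (Module.End ℂ A))
        rw [hmul, cornerA_mul_rowMat]
      rw [hw2]
      exact add_mem
        (AddSubmonoid.subset_closure ⟨p.1, _, rfl⟩)
        (ih j _ rfl)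
  have keyb : ∀ (b : A) (j : Fin n) (w : B),
      ((w : B) : Matrix (Fin n) (Fin n) (Module.End ℂ A)) = rowMat b j →
        w ∈ S := by
    intro b j w hw
    obtain ⟨l, hl⟩ := hquad b
    exact key l j w (by rw [hw, hl])
  -- `X` belongs to `S`.
  choose ξ hξ using fun j => hX 0 j
  have hXeq : (⟨X, hMnA X hX⟩ : B) =
      ∑ j : Fin n, (⟨rowMat (ξ j) j, hMnA _ (rowMat_inMnA (ξ j) j)⟩ : B) := by
    apply Subtype.ext
    rw [AddSubmonoidClass.coe_finset_sum]
    show X = ∑ j : Fin n, rowMat (ξ j) j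
    refine Matrix.ext fun i k => ?_
    rw [Matrix.sum_apply]
    by_cases hi : i = 0
    · subst hi
      rw [hξ k]
      rw [Finset.sum_eq_single k]
      · simp [rowMat]
      · intro j _ hj; simp [rowMat, Ne.symm hj]
      · intro h; exact absurd (Finset.mem_univ k) h
    · rw [hrow i k hi]
      refine (Finset.sum_eq_zero fun j _ => ?_).symm
      simp [rowMat, hi]
  have hXmem : (⟨X, hMnA X hX⟩ : B) ∈ S := by
    rw [hXeq]
    exact sum_mem fun j _ => keyb (ξ j) j _ rfl
  exact hPS _ (hΓS _ hXmem)
end
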